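/- arXiv:2108.07658 — 2 statements merged into one kernel-verified Lean document; each statement's English description precedes it below -/
import Mathlib

section
/- Let n, m be positive integers, w_m, y_m : ℝ → ℝⁿ and w_s, y_s : ℝ → ℝᵐ, and P⁺_mt, P⁻_mt, P⁺_st, P⁻_st : ℝ → ℝ. Let x_mt, x_st : ℝ → ℝ be differentiable and nonvanishing, satisfying the tank dynamics x_mt' = −⟨w_m, y_m⟩/x_mt + (P⁺_mt − P⁻_mt)/x_mt and x_st' = −⟨w_s, y_s⟩/x_st + (P⁺_st − P⁻_st)/x_st. Let H_c : ℝ → ℝ be differentiable with H_c' = P⁻_mt − P⁺_mt + P⁻_st − P⁺_st. Set H_mt = x_mt²/2, H_st = x_st²/2, u_mc = w_m, u_sc = w_s. Then for all t, (H_mt + H_c + H_st)'(t) = −⟨u_mc(t), y_m(t)⟩ − ⟨u_sc(t), y_s(t)⟩. -/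
open scoped RealInnerProductSpace

theorem hasDerivAt_half_sq_of_deriv_eq_div {x H : ℝ → ℝ} {t P : ℝ} (hH : ∀ s, H s = x s ^ 2 / 2)
    (hx : DifferentiableAt ℝ x t) (hx0 : x t ≠ 0) (hdyn : deriv x t = P / x t) :
    HasDerivAt H P t := by
  rw [funext hH]
  refine ((hx.hasDerivAt.pow 2).div_const 2).congr_deriv ?_
  rw [hdyn]
  field_simp
  ring

theorem bilateral_teleoperator_energy_balance_general
    (n m : ℕ)
    (wm ym : ℝ → EuclideanSpace ℝ (Fin n)) (ws ys : ℝ → EuclideanSpace ℝ (Fin m))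
    (Ppmt Pmmt Ppst Pmst : ℝ → ℝ) (xmt xst : ℝ → ℝ)
    (hxmt : Differentiable ℝ xmt) (hxst : Differentiable ℝ xst)
    (hxmt0 : ∀ t, xmt t ≠ 0) (hxst0 : ∀ t, xst t ≠ 0)
    (hdynm : ∀ t : ℝ, deriv xmt t = -⟪wm t, ym t⟫ / xmt t + (Ppmt t - Pmmt t) / xmt t)
    (hdyns : ∀ t : ℝ, deriv xst t = -⟪ws t, ys t⟫ / xst t + (Ppst t - Pmst t) / xst t)
    (Hc : ℝ → ℝ) (hHc : Differentiable ℝ Hc)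
    (hHcderiv : ∀ t : ℝ, deriv Hc t = Pmmt t - Ppmt t + Pmst t - Ppst t)
    (Hmt Hst : ℝ → ℝ)
    (hHmt : ∀ t, Hmt t = xmt t ^ 2 / 2) (hHst : ∀ t, Hst t = xst t ^ 2 / 2)
    (umc : ℝ → EuclideanSpace ℝ (Fin n)) (usc : ℝ → EuclideanSpace ℝ (Fin m))
    (humc : umc = wm) (husc : usc = ws) :
    ∀ t : ℝ, deriv (fun s => Hmt s + Hc s + Hst s) t =
      -⟪umc t, ym t⟫ - ⟪usc t, ys t⟫ := by
  intro t
  subst humc husc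
  have hmt := hasDerivAt_half_sq_of_deriv_eq_div hHmt (hxmt t) (hxmt0 t)
    ((hdynm t).trans (add_div _ _ _).symm)
  have hst := hasDerivAt_half_sq_of_deriv_eq_div hHst (hxst t) (hxst0 t)
    ((hdyns t).trans (add_div _ _ _).symm)
  have hsum : HasDerivAt (fun s => Hmt s + Hc s + Hst s) _ t :=
    (hmt.add (hHc t).hasDerivAt).add hst
  rw [hsum.deriv, hHcderiv]
  ring

theorem bilateral_teleoperator_energy_balance
    (n m : ℕ) (hn : 0 < n) (hm : 0 < m)
    (wm ym : ℝ → EuclideanSpace ℝ (Fin n)) (ws ys : ℝ → EuclideanSpace ℝ (Fin m))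
    (Ppmt Pmmt Ppst Pmst : ℝ → ℝ) (xmt xst : ℝ → ℝ)
    (hxmt : Differentiable ℝ xmt) (hxst : Differentiable ℝ xst)
    (hxmt0 : ∀ t, xmt t ≠ 0) (hxst0 : ∀ t, xst t ≠ 0)
    (hdynm : ∀ t : ℝ, deriv xmt t = -⟪wm t, ym t⟫ / xmt t + (Ppmt t - Pmmt t) / xmt t)
    (hdyns : ∀ t : ℝ, deriv xst t = -⟪ws t, ys t⟫ / xst t + (Ppst t - Pmst t) / xst t)
    (Hc : ℝ → ℝ) (hHc : Differentiable ℝ Hc)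
    (hHcderiv : ∀ t : ℝ, deriv Hc t = Pmmt t - Ppmt t + Pmst t - Ppst t)
    (Hmt Hst : ℝ → ℝ)
    (hHmt : ∀ t, Hmt t = xmt t ^ 2 / 2) (hHst : ∀ t, Hst t = xst t ^ 2 / 2)
    (umc : ℝ → EuclideanSpace ℝ (Fin n)) (usc : ℝ → EuclideanSpace ℝ (Fin m))
    (humc : umc = wm) (husc : usc = ws) :
    ∀ t : ℝ, deriv (fun s => Hmt s + Hc s + Hst s) t =
      -⟪umc t, ym t⟫ - ⟪usc t, ys t⟫ :=
  bilateral_teleoperator_energy_balance_general n m wm ym ws ys Ppmt Pmmt Ppst Pmst xmt xst hxmt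
    hxst hxmt0 hxst0 hdynm hdyns Hc hHc hHcderiv Hmt Hst hHmt hHst umc usc humc husc
end

section
/- Under the setup of the bilateral-teleoperator energy balance — x_mt, x_st : ℝ → ℝ differentiable and nonvanishing with x_mt' = (−⟨w_m, y_m⟩ + P⁺_mt − P⁻_mt)/x_mt and x_st' = (−⟨w_s, y_s⟩ + P⁺_st − P⁻_st)/x_st, H_c differentiable with H_c' = P⁻_mt − P⁺_mt + P⁻_st − P⁺_st and H_c ≥ 0, all signals continuous — the total storage H := x_mt²/2 + H_c + x_st²/2 is nonnegative and satisfies, for all t ≥ 0, H(t) − H(0) ≤ ∫₀ᵗ (⟨−w_m(s), y_m(s)⟩ + ⟨−w_s(s), y_s(s)⟩) ds. That is, the bilateral teleoperator is passive with respect to the input (−u_mc, −u_sc) = (−w_m, −w_s) and the output (y_m, y_s). -/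
/-! Along solutions each energy tank changes its storage `x²/2` at the rate `x ẋ`, which is
exactly the port power it receives; the powers `P±` leaving the tanks enter the communication
channel, so the total storage changes only through the supply rate `⟨-w_m, y_m⟩ + ⟨-w_s, y_s⟩`.
The fundamental theorem of calculus then gives the energy balance with equality. -/

open scoped RealInnerProductSpace

lemma hasDerivAt_sq_div_two_of_deriv_eq_div {x : ℝ → ℝ} {t p : ℝ}
    (hx : DifferentiableAt ℝ x t) (hx0 : x t ≠ 0) (hdx : deriv x t = p / x t) :
    HasDerivAt (fun u => x u ^ 2 / 2) p t := by
  refine ((hx.hasDerivAt.pow 2).div_const 2).congr_deriv ?_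
  rw [hdx]
  field_simp
  norm_num
  ring

theorem bilateral_teleoperator_is_passive_general
    (n m : ℕ)
    (wm ym : ℝ → EuclideanSpace ℝ (Fin n)) (ws ys : ℝ → EuclideanSpace ℝ (Fin m))
    (Ppmt Pmmt Ppst Pmst : ℝ → ℝ)
    (hwm : Continuous wm) (hym : Continuous ym) (hws : Continuous ws) (hys : Continuous ys)
    (xmt xst : ℝ → ℝ)
    (hxmt : Differentiable ℝ xmt) (hxst : Differentiable ℝ xst)
    (hxmt0 : ∀ t, xmt t ≠ 0) (hxst0 : ∀ t, xst t ≠ 0)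
    (hdynm : ∀ t : ℝ, deriv xmt t = (-⟪wm t, ym t⟫ + Ppmt t - Pmmt t) / xmt t)
    (hdyns : ∀ t : ℝ, deriv xst t = (-⟪ws t, ys t⟫ + Ppst t - Pmst t) / xst t)
    (Hc : ℝ → ℝ) (hHc : Differentiable ℝ Hc) (hHc0 : ∀ t, 0 ≤ Hc t)
    (hHcderiv : ∀ t : ℝ, deriv Hc t = Pmmt t - Ppmt t + Pmst t - Ppst t)
    (H : ℝ → ℝ) (hH : ∀ t, H t = xmt t ^ 2 / 2 + Hc t + xst t ^ 2 / 2) :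
    (∀ t, 0 ≤ H t) ∧
    (∀ t : ℝ, 0 ≤ t →
      H t - H 0 ≤ ∫ s in (0:ℝ)..t, (⟪-wm s, ym s⟫ + ⟪-ws s, ys s⟫)) := by
  obtain rfl : H = fun t => xmt t ^ 2 / 2 + Hc t + xst t ^ 2 / 2 := funext hH
  refine ⟨fun t => by have := hHc0 t; positivity, fun t _ => le_of_eq ?_⟩
  have hsupply : ∀ s, HasDerivAt (fun t => xmt t ^ 2 / 2 + Hc t + xst t ^ 2 / 2)
      (⟪-wm s, ym s⟫ + ⟪-ws s, ys s⟫) s := by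
    intro s
    have hmt := hasDerivAt_sq_div_two_of_deriv_eq_div (hxmt s) (hxmt0 s) (hdynm s)
    have hst := hasDerivAt_sq_div_two_of_deriv_eq_div (hxst s) (hxst0 s) (hdyns s)
    have hc := hHcderiv s ▸ (hHc s).hasDerivAt
    refine ((hmt.add hc).add hst).congr_deriv ?_
    simp only [inner_neg_left]
    ring
  have hcont : Continuous fun s => ⟪-wm s, ym s⟫ + ⟪-ws s, ys s⟫ :=
    (hwm.neg.inner hym).add (hws.neg.inner hys)
  exact (intervalIntegral.integral_eq_sub_of_hasDerivAt (fun s _ => hsupply s)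
    (hcont.intervalIntegrable 0 t)).symm

theorem bilateral_teleoperator_is_passive
    (n m : ℕ) (hn : 0 < n) (hm : 0 < m)
    (wm ym : ℝ → EuclideanSpace ℝ (Fin n)) (ws ys : ℝ → EuclideanSpace ℝ (Fin m))
    (Ppmt Pmmt Ppst Pmst : ℝ → ℝ)
    (hwm : Continuous wm) (hym : Continuous ym) (hws : Continuous ws) (hys : Continuous ys)
    (hPpmt : Continuous Ppmt) (hPmmt : Continuous Pmmt)
    (hPpst : Continuous Ppst) (hPmst : Continuous Pmst)
    (xmt xst : ℝ → ℝ)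
    (hxmt : Differentiable ℝ xmt) (hxst : Differentiable ℝ xst)
    (hxmt0 : ∀ t, xmt t ≠ 0) (hxst0 : ∀ t, xst t ≠ 0)
    (hdynm : ∀ t : ℝ, deriv xmt t = (-⟪wm t, ym t⟫ + Ppmt t - Pmmt t) / xmt t)
    (hdyns : ∀ t : ℝ, deriv xst t = (-⟪ws t, ys t⟫ + Ppst t - Pmst t) / xst t)
    (Hc : ℝ → ℝ) (hHc : Differentiable ℝ Hc) (hHc0 : ∀ t, 0 ≤ Hc t)
    (hHcderiv : ∀ t : ℝ, deriv Hc t = Pmmt t - Ppmt t + Pmst t - Ppst t)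
    (H : ℝ → ℝ) (hH : ∀ t, H t = xmt t ^ 2 / 2 + Hc t + xst t ^ 2 / 2) :
    (∀ t, 0 ≤ H t) ∧
    (∀ t : ℝ, 0 ≤ t →
      H t - H 0 ≤ ∫ s in (0:ℝ)..t, (⟪-wm s, ym s⟫ + ⟪-ws s, ys s⟫)) :=
  bilateral_teleoperator_is_passive_general n m wm ym ws ys Ppmt Pmmt Ppst Pmst hwm hym hws hys xmt
    xst hxmt hxst hxmt0 hxst0 hdynm hdyns Hc hHc hHc0 hHcderiv H hH
end
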